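/- arXiv:2503.16783 — 2 statements merged into one kernel-verified Lean document; each statement's English description precedes it below -/
import Mathlib

section
/- Let f be a natural number, let V be a finite set with |V| = 3f + 1, and let C ⊆ V with |C| = f + 1. Let Q₁, Q₂ ⊆ V be such that Q₁ ∩ C and Q₂ ∩ C are disjoint. If 2·|Q₁| ≥ 5f + 2 (i.e., |Q₁| ≥ 2f + f/2 + 1), then |Q₂| < |Q₁|. -/
/-!
At most `2f` validators lie outside `C`, so `Q₁` contains at least `|Q₁| - 2f` correct
validators. Disjointness leaves at most `(f + 1) - (|Q₁| - 2f)` correct validators for `Q₂`,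
hence `|Q₂| ≤ 5f + 1 - |Q₁| < |Q₁|`.
-/

namespace Finset

variable {α : Type*} [DecidableEq α]

theorem card_le_card_inter_add_card_sdiff_of_subset {Q V : Finset α} (C : Finset α)
    (hQV : Q ⊆ V) : Q.card ≤ (Q ∩ C).card + (V \ C).card := by
  calc Q.card ≤ (Q ∩ C ∪ V \ C).card := card_le_card fun x hx => by
          by_cases hxC : x ∈ C
          · exact mem_union_left _ (mem_inter.2 ⟨hx, hxC⟩)
          · exact mem_union_right _ (mem_sdiff.2 ⟨hQV hx, hxC⟩)
    _ ≤ (Q ∩ C).card + (V \ C).card := card_union_le _ _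

theorem card_inter_add_card_inter_le_of_disjoint {Q₁ Q₂ C : Finset α}
    (hdisj : Disjoint (Q₁ ∩ C) (Q₂ ∩ C)) : (Q₁ ∩ C).card + (Q₂ ∩ C).card ≤ C.card := by
  rw [← card_union_of_disjoint hdisj]
  exact card_le_card (union_subset inter_subset_right inter_subset_right)

end Finset

/-- Strongest ledger: with `3f+1` validators, `f+1` of which are correct (`C`), if
the correct signers of two ledgers are disjoint and one ledger has at least
`2f + f/2 + 1` signatures (i.e., `2·|Q₁| ≥ 5f+2`), the other has strictly fewer. -/
theorem strongest_ledger_unique {α : Type*} [DecidableEq α] (f : ℕ)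
    (V C Q₁ Q₂ : Finset α)
    (hV : V.card = 3 * f + 1)
    (hCV : C ⊆ V) (hC : C.card = f + 1)
    (hQ₁V : Q₁ ⊆ V) (hQ₂V : Q₂ ⊆ V)
    (hdisj : Disjoint (Q₁ ∩ C) (Q₂ ∩ C))
    (h₁ : 5 * f + 2 ≤ 2 * Q₁.card) :
    Q₂.card < Q₁.card := by
  have hfaulty : (V \ C).card = 2 * f := by
    rw [Finset.card_sdiff_of_subset hCV, hV, hC]
    omega
  have hQ₁ := Finset.card_le_card_inter_add_card_sdiff_of_subset C hQ₁V
  have hQ₂ := Finset.card_le_card_inter_add_card_sdiff_of_subset C hQ₂V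
  have hcorrect := Finset.card_inter_add_card_inter_le_of_disjoint hdisj
  omega
end

section
/- Let f and m be natural numbers with 1 ≤ f and m ≤ f − 1. Then f ≤ (m + 1)·(f − m). Consequently, for every real C ≥ 0, (((f + m + 1)/(m + 1)) − 1) · (C/(f − m)) ≤ C (with f, m regarded as real numbers). -/
/-! Since `Γ − 1 = f/(m+1)`, the benefit is `f·C/((m+1)(f−m))`, so it suffices that
`f ≤ (m+1)(f−m)`. This holds because `f − m ≥ 1`: `(m+1)(f−m) = m(f−m) + (f−m) ≥ m + (f−m) = f`. -/

theorem Nat.le_succ_mul_sub_of_lt {f m : ℕ} (h : m < f) : f ≤ (m + 1) * (f - m) := by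
  have hm : m ≤ m * (f - m) := Nat.le_mul_of_pos_right m (Nat.sub_pos_of_lt h)
  calc f = m + (f - m) := (Nat.add_sub_of_le h.le).symm
    _ ≤ m * (f - m) + (f - m) := Nat.add_le_add_right hm _
    _ = (m + 1) * (f - m) := by ring

theorem add_add_one_div_add_one_sub_one {K : Type*} [Field K] (a : K) {b : K} (hb : b + 1 ≠ 0) :
    (a + b + 1) / (b + 1) - 1 = a / (b + 1) := by
  rw [div_sub_one hb]
  ring_nf

theorem div_mul_div_le_of_le_mul {K : Type*} [Field K] [LinearOrder K] [IsStrictOrderedRing K]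
    {x y z C : K} (hy : 0 < y) (hz : 0 < z) (hxyz : x ≤ y * z)
    (hC : 0 ≤ C) : x / y * (C / z) ≤ C :=
  calc x / y * (C / z) = x / (y * z) * C := by field_simp
    _ ≤ 1 * C := by gcongr; exact div_le_one_of_le₀ hxyz (by positivity)
    _ = C := one_mul C

/-- With `Γ = (f+m+1)/(m+1)` conflicting ledgers and `f − m` rational validators
sharing the collateral bound `C` per ledger, the benefit `(Γ − 1)·C/(f − m)` is
bounded by `C`, since `f ≤ (m+1)·(f−m)` for `m ≤ f − 1`. -/
theorem fork_benefit_bounded (f m : ℕ) (hf : 1 ≤ f) (hm : m ≤ f - 1) :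
    f ≤ (m + 1) * (f - m) ∧
    ∀ C : ℝ, 0 ≤ C →
      (((f : ℝ) + m + 1) / ((m : ℝ) + 1) - 1) * (C / ((f : ℝ) - m)) ≤ C := by
  have hmf : m < f := by omega
  have hle := Nat.le_succ_mul_sub_of_lt hmf
  refine ⟨hle, fun C hC => ?_⟩
  have hle_real : (f : ℝ) ≤ ((m : ℝ) + 1) * ((f : ℝ) - m) := by
    rw [← Nat.cast_sub hmf.le]
    exact_mod_cast hle
  have hgap : (0 : ℝ) < (f : ℝ) - m := sub_pos.mpr (by exact_mod_cast hmf)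
  rw [add_add_one_div_add_one_sub_one _ (by positivity)]
  exact div_mul_div_le_of_le_mul (by positivity) hgap hle_real hC
end
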